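/- For any symmetric matrices B and X with X ⪰ 0, one has max { Tr(PB) : 0 ⪯ P ⪯ X } = Tr(X^{1/2} B X^{1/2})₊, where Tr(M)₊ denotes the sum of the positive eigenvalues of M. -/

import Mathlib

open scoped ComplexOrder in
/-- The positive semidefinite square root of a positive semidefinite matrix
(Mathlib's former `Matrix.PosSemidef.sqrt`, removed since; restated with its old definition). -/
noncomputable def Matrix.PosSemidef.sqrt {n : Type*} [Fintype n] [DecidableEq n]
    {𝕜 : Type*} [RCLike 𝕜] {A : Matrix n n 𝕜} (hA : A.PosSemidef) : Matrix n n 𝕜 :=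
  hA.1.eigenvectorUnitary.1 * Matrix.diagonal ((↑) ∘ (fun x : ℝ => Real.sqrt x) ∘ hA.1.eigenvalues) *
    (star hA.1.eigenvectorUnitary : Matrix n n 𝕜)

open Matrix in
noncomputable def mconj {m : Type*} [Fintype m] [DecidableEq m]
    (W : Matrix.unitaryGroup m ℝ) (a : m → ℝ) : Matrix m m ℝ :=
  (W : Matrix m m ℝ) * Matrix.diagonal a * star (W : Matrix m m ℝ)

namespace mconj
open Matrix
variable {m : Type*} [Fintype m] [DecidableEq m] (W : Matrix.unitaryGroup m ℝ) (a b : m → ℝ)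

lemma mul_mconj : mconj W a * mconj W b = mconj W (fun i => a i * b i) := by
  unfold mconj
  calc (W : Matrix m m ℝ) * diagonal a * star (W : Matrix m m ℝ) *
        ((W : Matrix m m ℝ) * diagonal b * star (W : Matrix m m ℝ))
      = (W : Matrix m m ℝ) * (diagonal a * ((star (W : Matrix m m ℝ) * (W : Matrix m m ℝ)) *
          (diagonal b * star (W : Matrix m m ℝ)))) := by simp only [Matrix.mul_assoc]
    _ = (W : Matrix m m ℝ) * (diagonal a * (diagonal b * star (W : Matrix m m ℝ))) := by
          rw [Unitary.coe_star_mul_self, Matrix.one_mul]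
    _ = (W : Matrix m m ℝ) * diagonal (fun i => a i * b i) * star (W : Matrix m m ℝ) := by
          rw [← Matrix.mul_assoc (diagonal a), Matrix.diagonal_mul_diagonal,
            ← Matrix.mul_assoc]

lemma posSemidef (ha : ∀ i, 0 ≤ a i) : (mconj W a).PosSemidef := by
  have := (Matrix.PosSemidef.diagonal (d := a) ha).mul_mul_conjTranspose_same (W : Matrix m m ℝ)
  simpa [mconj, Matrix.star_eq_conjTranspose] using this

lemma isHermitian : (mconj W a).IsHermitian := by
  simp [mconj, Matrix.IsHermitian, Matrix.star_eq_conjTranspose, Matrix.conjTranspose_mul,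
    Matrix.diagonal_conjTranspose, Matrix.mul_assoc]

lemma one : mconj W (fun _ => 1) = 1 := by
  simp [mconj, Matrix.diagonal_one, Unitary.coe_mul_star_self]

lemma sub : mconj W a - mconj W b = mconj W (fun i => a i - b i) := by
  unfold mconj
  rw [show (diagonal fun i => a i - b i) = diagonal a - diagonal b from
    (Matrix.diagonal_sub a b).symm]
  rw [Matrix.mul_sub, Matrix.sub_mul]

lemma trace : (mconj W a).trace = ∑ i, a i := by
  unfold mconj
  rw [Matrix.mul_assoc, Matrix.trace_mul_comm, Matrix.mul_assoc, Unitary.coe_star_mul_self,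
    Matrix.mul_one, Matrix.trace_diagonal]

end mconj

section helpers
open Matrix
variable {m : Type*} [Fintype m] [DecidableEq m]

lemma psd_diag_nonneg {A : Matrix m m ℝ} (hA : A.PosSemidef) (i : m) : 0 ≤ A i i := by
  exact hA.diag_nonneg

lemma psd_trace_nonneg {A : Matrix m m ℝ} (hA : A.PosSemidef) : 0 ≤ A.trace :=
  Finset.sum_nonneg fun i _ => psd_diag_nonneg hA i

lemma eq_zero_of_trace_ct {A : Matrix m m ℝ} (h : (Aᴴ * A).trace = 0) : A = 0 := by
  have hs : (Aᴴ * A).trace = ∑ i, ∑ j, (A j i)^2 := by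
    simp [Matrix.trace, Matrix.diag, Matrix.mul_apply, Matrix.conjTranspose_apply, sq]
  rw [hs] at h
  ext i j
  have h1 := (Finset.sum_eq_zero_iff_of_nonneg (fun k _ =>
    Finset.sum_nonneg fun l _ => sq_nonneg (A l k))).mp h j (Finset.mem_univ j)
  have h2 := (Finset.sum_eq_zero_iff_of_nonneg (fun l _ => sq_nonneg (A l j))).mp h1 i
    (Finset.mem_univ i)
  simpa using pow_eq_zero_iff (n := 2) (by norm_num) |>.mp h2

lemma psd_conj_herm {A S : Matrix m m ℝ} (hA : A.PosSemidef) (hS : S.IsHermitian) :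
    (S * A * S).PosSemidef := by
  have := hA.mul_mul_conjTranspose_same S
  rwa [show Sᴴ = S from hS] at this

lemma trace_mul_diag (A : Matrix m m ℝ) (d : m → ℝ) :
    (A * diagonal d).trace = ∑ i, A i i * d i := by
  simp [Matrix.trace, Matrix.diag, Matrix.mul_diagonal]

lemma Matrix.PosSemidef.sqrt_eq_mconj {A : Matrix m m ℝ} (hA : A.PosSemidef) :
    hA.sqrt = mconj hA.1.eigenvectorUnitary (fun i => Real.sqrt (hA.1.eigenvalues i)) := by
  simp [Matrix.PosSemidef.sqrt, mconj, Function.comp_def]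

lemma Matrix.PosSemidef.posSemidef_sqrt {A : Matrix m m ℝ} (hA : A.PosSemidef) :
    hA.sqrt.PosSemidef := by
  rw [hA.sqrt_eq_mconj]
  exact mconj.posSemidef _ _ (fun i => Real.sqrt_nonneg _)

lemma Matrix.PosSemidef.sqrt_mul_self {A : Matrix m m ℝ} (hA : A.PosSemidef) :
    hA.sqrt * hA.sqrt = A := by
  rw [hA.sqrt_eq_mconj, mconj.mul_mconj]
  have e : (fun i => Real.sqrt (hA.1.eigenvalues i) * Real.sqrt (hA.1.eigenvalues i)) =
      hA.1.eigenvalues := funext fun i => Real.mul_self_sqrt (hA.eigenvalues_nonneg i)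
  rw [e]
  simpa [mconj] using hA.1.spectral_theorem.symm

end helpers

set_option maxHeartbeats 2000000 in

theorem stmt_18 (n : ℕ) (B X : Matrix (Fin n) (Fin n) ℝ) (hBh : B.IsHermitian)
    (hX : X.PosSemidef) (h : (hX.sqrt * B * hX.sqrt).IsHermitian) :
    sSup {t : ℝ | ∃ P : Matrix (Fin n) (Fin n) ℝ,
        P.PosSemidef ∧ (X - P).PosSemidef ∧ t = (P * B).trace} =
      ∑ i, max (h.eigenvalues i) 0 := by
  classical
  open Matrix in
  set S := hX.sqrt with hSdef
  have hS : S.PosSemidef := hX.posSemidef_sqrt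
  have hSS : S * S = X := hX.sqrt_mul_self
  have hSh : S.IsHermitian := hS.1
  set W := hSh.eigenvectorUnitary with hWdef
  set ν := hSh.eigenvalues with hνdef
  have hνnn : ∀ i, 0 ≤ ν i := fun i => hS.eigenvalues_nonneg i
  have hSspec : S = mconj W ν := by
    simpa [mconj] using hSh.spectral_theorem
  set U := h.eigenvectorUnitary with hUdef
  set lam := h.eigenvalues with hlamdef
  have hMspec : S * B * S = mconj U lam := by
    simpa [mconj] using h.spectral_theorem
  -- trace rearrangement: for any A, (S * A * S * B).trace = (A * (S * B * S)).trace
  have trace_rearrange : ∀ A : Matrix (Fin n) (Fin n) ℝ,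
      (S * A * S * B).trace = (A * (S * B * S)).trace := by
    intro A
    have e1 : S * A * S * B = S * (A * (S * B)) := by simp only [Matrix.mul_assoc]
    rw [e1, Matrix.trace_mul_comm]
    simp only [Matrix.mul_assoc]
  apply IsGreatest.csSup_eq
  constructor
  · -- the value is attained at P₀ = S * N * S
    set χ : Fin n → ℝ := fun i => if 0 < lam i then 1 else 0 with hχdef
    set N := mconj U χ with hNdef
    have hχnn : ∀ i, 0 ≤ χ i := fun i => by by_cases hi : 0 < lam i <;> simp [hχdef, hi]
    have hN : N.PosSemidef := mconj.posSemidef U χ hχnn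
    refine ⟨S * N * S, psd_conj_herm hN hSh, ?_, ?_⟩
    · have e : X - S * N * S = S * (1 - N) * S := by
        rw [Matrix.mul_sub, Matrix.mul_one, Matrix.sub_mul, hSS]
      rw [e]
      have h1N : (1 : Matrix (Fin n) (Fin n) ℝ) - N = mconj U (fun i => 1 - χ i) := by
        rw [← mconj.one U, mconj.sub]
      rw [h1N]
      exact psd_conj_herm (mconj.posSemidef U _ (fun i => by
        by_cases hi : 0 < lam i <;> simp [hχdef, hi])) hSh
    · rw [trace_rearrange, hMspec, hNdef, mconj.mul_mconj, mconj.trace]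
      apply Finset.sum_congr rfl
      intro i _
      by_cases hi : 0 < lam i
      · simp [hχdef, hi, max_eq_left (le_of_lt hi)]
      · simp [hχdef, hi, max_eq_right (not_lt.mp hi)]
  · -- upper bound
    rintro t ⟨P, hP, hXP, rfl⟩
    -- kernel projections
    set κ : Fin n → ℝ := fun i => if ν i = 0 then 1 else 0 with hκdef
    set g : Fin n → ℝ := fun i => if ν i = 0 then 0 else (ν i)⁻¹ with hgdef
    set π : Fin n → ℝ := fun i => if ν i = 0 then 0 else 1 with hπdef
    set K := mconj W κ with hKdef
    set T := mconj W g with hTdef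
    have hKpsd : K.PosSemidef := mconj.posSemidef W κ (fun i => by
      by_cases hi : ν i = 0 <;> simp [hκdef, hi])
    have hKh : Kᴴ = K := hKpsd.1
    have hTh : Tᴴ = T := (mconj.isHermitian W g)
    have hSK : S * K = 0 := by
      rw [hSspec, hKdef, mconj.mul_mconj]
      have : (fun i => ν i * κ i) = fun _ => (0:ℝ) := by
        funext i; by_cases hi : ν i = 0 <;> simp [hκdef, hi]
      rw [this, mconj, Matrix.diagonal_zero, Matrix.mul_zero, Matrix.zero_mul]
    have hXK : X * K = 0 := by rw [← hSS, Matrix.mul_assoc, hSK, Matrix.mul_zero]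
    have hKXK : K * X * K = 0 := by rw [Matrix.mul_assoc, hXK, Matrix.mul_zero]
    -- K * P * K = 0
    set R := hP.sqrt with hRdef
    have hRR : R * R = P := hP.sqrt_mul_self
    have hRh : Rᴴ = R := hP.posSemidef_sqrt.1
    have key : K * P * K = (R * K)ᴴ * (R * K) := by
      rw [Matrix.conjTranspose_mul, hRh, hKh, ← hRR]
      simp only [Matrix.mul_assoc]
    have htrKPK : ((R * K)ᴴ * (R * K)).trace = 0 := by
      rw [← key]
      have hsplit : K * (X - P) * K = K * X * K - K * P * K := by
        rw [Matrix.mul_sub, Matrix.sub_mul]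
      have h1 : 0 ≤ (K * (X - P) * K).trace :=
        psd_trace_nonneg (psd_conj_herm hXP (hKpsd.1))
      have h2 : 0 ≤ (K * P * K).trace := psd_trace_nonneg (psd_conj_herm hP (hKpsd.1))
      rw [hsplit, hKXK, zero_sub, Matrix.trace_neg] at h1
      linarith
    have hRK : R * K = 0 := eq_zero_of_trace_ct htrKPK
    have hPK : P * K = 0 := by
      rw [← hRR, Matrix.mul_assoc, hRK, Matrix.mul_zero]
    have hKP : K * P = 0 := by
      have := congrArg Matrix.conjTranspose hPK
      rwa [Matrix.conjTranspose_mul, hKh, show Pᴴ = P from hP.1,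
        Matrix.conjTranspose_zero] at this
    -- Q = T * P * T satisfies 0 ⪯ Q ⪯ 1 and S * Q * S = P
    set Q := T * P * T with hQdef
    have hQpsd : Q.PosSemidef := psd_conj_herm hP (mconj.isHermitian W g)
    have hfun1 : (fun i => ν i * g i) = π := by
      funext i
      simp only [hgdef, hπdef]
      by_cases hi : ν i = 0 <;> simp [hi, mul_inv_cancel₀]
    have hfun2 : (fun i => g i * ν i) = π := by
      funext i
      simp only [hgdef, hπdef]
      by_cases hi : ν i = 0 <;> simp [hi, inv_mul_cancel₀]
    have hST : S * T = mconj W π := by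
      rw [hSspec, hTdef, mconj.mul_mconj, hfun1]
    have hTS : T * S = mconj W π := by
      rw [hSspec, hTdef, mconj.mul_mconj, hfun2]
    have hπK : mconj W π = 1 - K := by
      have hfun4 : (fun i => (1:ℝ) - κ i) = π := by
        funext i
        simp only [hκdef, hπdef]
        by_cases hi : ν i = 0 <;> simp [hi]
      rw [← mconj.one W, hKdef, mconj.sub, hfun4]
    have hSQS : S * Q * S = P := by
      have e : S * Q * S = (S * T) * P * (T * S) := by
        rw [hQdef]; simp only [Matrix.mul_assoc]
      rw [e, hST, hTS, hπK, Matrix.sub_mul, Matrix.one_mul, hKP, sub_zero,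
        Matrix.mul_sub, Matrix.mul_one, hPK, sub_zero]
    have hTXT : T * X * T = mconj W π := by
      have e : T * X * T = (T * S) * (S * T) := by
        rw [← hSS]; simp only [Matrix.mul_assoc]
      have hfun3 : (fun i => π i * π i) = π := by
        funext i
        simp only [hπdef]
        by_cases hi : ν i = 0 <;> simp [hi]
      rw [e, hST, hTS, mconj.mul_mconj, hfun3]
    have h1Q : ((1 : Matrix (Fin n) (Fin n) ℝ) - Q).PosSemidef := by
      have e : (1 : Matrix (Fin n) (Fin n) ℝ) - Q = K + T * (X - P) * T := by
        have : T * (X - P) * T = T * X * T - T * P * T := by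
          rw [Matrix.mul_sub, Matrix.sub_mul]
        rw [this, hTXT, hπK, hQdef]
        abel
      rw [e]
      exact hKpsd.add (psd_conj_herm hXP (mconj.isHermitian W g))
    -- trace computation
    have htr : (P * B).trace = (Q * mconj U lam).trace := by
      rw [← hSQS, trace_rearrange, hMspec]
    set R' := star (U : Matrix (Fin n) (Fin n) ℝ) * Q * (U : Matrix (Fin n) (Fin n) ℝ)
      with hR'def
    have hR'psd : R'.PosSemidef := by
      have := hQpsd.conjTranspose_mul_mul_same (U : Matrix (Fin n) (Fin n) ℝ)
      simpa [hR'def, Matrix.star_eq_conjTranspose] using this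
    have h1R' : ∀ i, R' i i ≤ 1 := by
      intro i
      have e : (1 : Matrix (Fin n) (Fin n) ℝ) - R' =
          star (U : Matrix (Fin n) (Fin n) ℝ) * (1 - Q) * (U : Matrix (Fin n) (Fin n) ℝ) := by
        rw [Matrix.mul_sub, Matrix.sub_mul, Matrix.mul_one, Unitary.coe_star_mul_self, hR'def]
      have hpsd : ((1 : Matrix (Fin n) (Fin n) ℝ) - R').PosSemidef := by
        rw [e]
        have := h1Q.conjTranspose_mul_mul_same (U : Matrix (Fin n) (Fin n) ℝ)
        simpa [Matrix.star_eq_conjTranspose] using this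
      have := psd_diag_nonneg hpsd i
      rw [Matrix.sub_apply, Matrix.one_apply_eq] at this
      linarith
    have htr2 : (Q * mconj U lam).trace = ∑ i, R' i i * lam i := by
      have e : Q * mconj U lam =
          (U : Matrix (Fin n) (Fin n) ℝ) * (R' * Matrix.diagonal lam) *
            star (U : Matrix (Fin n) (Fin n) ℝ) := by
        rw [hR'def]
        simp only [mconj, Matrix.mul_assoc]
        conv_rhs => rw [← Matrix.mul_assoc]
        rw [Matrix.mem_unitaryGroup_iff.mp U.2, Matrix.one_mul]
      rw [e, Matrix.mul_assoc, Matrix.trace_mul_comm, Matrix.mul_assoc,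
        Unitary.coe_star_mul_self, Matrix.mul_one, trace_mul_diag]
    rw [htr, htr2]
    apply Finset.sum_le_sum
    intro i _
    have h0 : 0 ≤ R' i i := psd_diag_nonneg hR'psd i
    have h1 : R' i i ≤ 1 := h1R' i
    rcases le_or_gt (lam i) 0 with hl | hl
    · have : R' i i * lam i ≤ 0 := mul_nonpos_of_nonneg_of_nonpos h0 hl
      simpa [max_eq_right hl] using this
    · have : R' i i * lam i ≤ lam i := mul_le_of_le_one_left (le_of_lt hl) h1
      simpa [max_eq_left (le_of_lt hl)] using this
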